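/- arXiv:2009.00862 — 2 statements merged into one kernel-verified Lean document; each statement's English description precedes it below -/
import Mathlib

section
/- The discrete Wasserstein distance at time t satisfies the upper bound W(t) ≤ ∑_{i=1}^t W̃(i) + ∑_{j=1}^N n_t(y_j)·‖x_t − y_j‖, where W̃(i) is the optimal cost of the single-source LP at step i and n_t(y_j) are the remaining weights after t weight updates. -/
/-!
The optimal cost `W(t)` is an infimum over transport plans, so it suffices to exhibit one plan
whose cost is the right-hand side. Take row `i` to be the step-`i` plan `p i`, and send the
whole leftover sample mass `n t` from the accumulation point `x (t-1)`. The caps `p i ≤ n i`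
keep `n t` nonnegative, and `n t = 1/N - ∑_{i<t} p i` telescopes, which gives both the column
sums `1/N` and the leftover mass `(M - t)/M` carried by the last row.
-/

open Finset

section TransportPlan

variable {ι κ : Type*}

def transportCosts [Fintype ι] [Fintype κ] (r : ι → ℝ) (c : κ → ℝ) (d : ι → κ → ℝ) : Set ℝ :=
  {w | ∃ π : ι → κ → ℝ, (∀ i j, 0 ≤ π i j) ∧ (∀ i, ∑ j, π i j = r i) ∧
    (∀ j, ∑ i, π i j = c j) ∧ w = ∑ i, ∑ j, π i j * d i j}

theorem csInf_transportCosts_le [Fintype ι] [Fintype κ] {r : ι → ℝ} {c : κ → ℝ} {d : ι → κ → ℝ}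
    (hd : ∀ i j, 0 ≤ d i j) {π : ι → κ → ℝ} (hπ : ∀ i j, 0 ≤ π i j)
    (hr : ∀ i, ∑ j, π i j = r i) (hc : ∀ j, ∑ i, π i j = c j) :
    sInf (transportCosts r c d) ≤ ∑ i, ∑ j, π i j * d i j := by
  refine csInf_le ⟨0, ?_⟩ ⟨π, hπ, hr, hc, rfl⟩
  rintro w ⟨σ, hσ, -, -, rfl⟩
  exact sum_nonneg fun i _ => sum_nonneg fun j _ => mul_nonneg (hσ i j) (hd i j)

variable {R : Type*} [DecidableEq ι] (p : ι → κ → R) (a : ι) (q : κ → R)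

theorem sum_add_ite_row [AddCommMonoid R] [Fintype κ] (i : ι) :
    ∑ j, (p i j + if i = a then q j else 0) = ∑ j, p i j + if i = a then ∑ j, q j else 0 := by
  rw [sum_add_distrib, sum_ite_irrel, sum_const_zero]

theorem sum_add_ite_column [AddCommMonoid R] [Fintype ι] (j : κ) :
    ∑ i, (p i j + if i = a then q j else 0) = ∑ i, p i j + q j := by
  rw [sum_add_distrib, sum_ite_eq' univ a fun _ => q j, if_pos (mem_univ a)]

theorem sum_add_ite_mul [NonUnitalNonAssocSemiring R] [Fintype ι] [Fintype κ]
    (d : ι → κ → R) :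
    ∑ i, ∑ j, (p i j + if i = a then q j else 0) * d i j =
      ∑ i, ∑ j, p i j * d i j + ∑ j, q j * d a j := by
  simp only [add_mul, ite_mul, zero_mul, sum_add_distrib, sum_ite_irrel, sum_const_zero,
    sum_ite_eq', mem_univ, if_true]

end TransportPlan

theorem eq_sub_sum_range_of_succ_eq_sub {G : Type*} [AddCommGroup G] {a d : ℕ → G} {t : ℕ}
    (h : ∀ i < t, a (i + 1) = a i - d i) : a t = a 0 - ∑ i ∈ range t, d i := by
  have hd : ∀ i ∈ range t, d i = a i - a (i + 1) := fun i hi => by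
    rw [h i (mem_range.mp hi), sub_sub_cancel]
  rw [sum_congr rfl hd, sum_range_sub', sub_sub_cancel]

theorem wasserstein_upper_bound_single_agent_general {M N t : ℕ}
    (hM : 0 < M) (hN : 0 < N) (ht : 0 < t)
    (x : Fin t → EuclideanSpace ℝ (Fin 2)) (y : Fin N → EuclideanSpace ℝ (Fin 2))
    (n : ℕ → Fin N → ℝ) (hn0 : ∀ j, n 0 j = 1 / (N : ℝ))
    (p : ℕ → Fin N → ℝ)
    (hp0 : ∀ i, i < t → ∀ j, 0 ≤ p i j)
    (hpsum : ∀ i, i < t → ∑ j, p i j = 1 / (M : ℝ))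
    (hpcap : ∀ i, i < t → ∀ j, p i j ≤ min (n i j) (1 / (M : ℝ)))
    (hupd : ∀ i, i < t → ∀ j, n (i + 1) j = n i j - p i j) :
    sInf {w : ℝ | ∃ π : Fin t → Fin N → ℝ,
        (∀ i j, 0 ≤ π i j) ∧
        (∀ i : Fin t, ∑ j, π i j =
          1 / (M : ℝ) + if (i : ℕ) = t - 1 then ((M : ℝ) - t) / M else 0) ∧
        (∀ j, ∑ i, π i j = 1 / (N : ℝ)) ∧
        w = ∑ i, ∑ j, π i j * ‖x i - y j‖} ≤
      (∑ i : Fin t, ∑ j, p i j * ‖x i - y j‖) +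
        ∑ j, n t j * ‖x ⟨t - 1, Nat.sub_lt ht one_pos⟩ - y j‖ := by
  set a : Fin t := ⟨t - 1, Nat.sub_lt ht one_pos⟩
  have hrest : ∀ j, n t j = 1 / N - ∑ i : Fin t, p i j := fun j => by
    rw [eq_sub_sum_range_of_succ_eq_sub (a := (n · j)) fun i hi => hupd i hi j, hn0,
      sum_range fun i => p i j]
  have hrest_nonneg : ∀ j, 0 ≤ n t j := fun j => by
    have hlast := hupd (t - 1) a.isLt j
    rw [Nat.sub_one_add_one ht.ne'] at hlast
    linarith [(hpcap (t - 1) a.isLt j).trans (min_le_left _ _)]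
  have hrest_mass : ∑ j, n t j = ((M : ℝ) - t) / M := by
    rw [sum_congr rfl fun j _ => hrest j, sum_sub_distrib, sum_comm,
      sum_congr rfl fun (i : Fin t) _ => hpsum i i.isLt]
    simp only [sum_const, card_univ, Fintype.card_fin, nsmul_eq_mul]
    field_simp
  calc _ ≤ ∑ i : Fin t, ∑ j, (p i j + if i = a then n t j else 0) * ‖x i - y j‖ := by
        refine csInf_transportCosts_le (fun _ _ => norm_nonneg _) (fun i j => ?_) (fun i => ?_)
          (fun j => ?_)
        · have := hp0 i i.isLt j
          split_ifs <;> linarith [hrest_nonneg j]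
        · rw [sum_add_ite_row (fun (i : Fin t) => p i), hpsum i i.isLt, hrest_mass]
          simp only [a, Fin.ext_iff]
        · rw [sum_add_ite_column, hrest]
          ring
    _ = _ := sum_add_ite_mul _ _ _ _

/-- **Upper bound on the Wasserstein distance (Theorem 1).**
Robot points `x 0, …, x (t-1)` each carry mass `1/M`, and the remaining
`(M - t)/M` mass is accumulated at the current position `x (t-1)` (Assumption 1).
Sample points `y j` carry weights `n t j`, obtained from the initial weights `1/N`
by subtracting at each step `i < t` the optimal plan `p i` of the single-source LP
(with transported mass `1/M` and capacities `min (n i j) (1/M)`), whose optimal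
cost is `W̃(i) = ∑ j, p i j * ‖x i - y j‖`.  Then the optimal value `W(t)` of the
full transportation LP between the robot-point measure and the uniform sample
measure satisfies `W(t) ≤ ∑_{i<t} W̃(i) + ∑_j n t j * ‖x (t-1) - y j‖`. -/
theorem wasserstein_upper_bound_single_agent {M N t : ℕ}
    (hM : 0 < M) (hN : 0 < N) (ht : 0 < t) (htM : t ≤ M)
    (x : Fin t → EuclideanSpace ℝ (Fin 2)) (y : Fin N → EuclideanSpace ℝ (Fin 2))
    (n : ℕ → Fin N → ℝ) (hn0 : ∀ j, n 0 j = 1 / (N : ℝ))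
    (p : ℕ → Fin N → ℝ)
    (hp0 : ∀ i, i < t → ∀ j, 0 ≤ p i j)
    (hpsum : ∀ i, i < t → ∑ j, p i j = 1 / (M : ℝ))
    (hpcap : ∀ i, i < t → ∀ j, p i j ≤ min (n i j) (1 / (M : ℝ)))
    (hupd : ∀ i, i < t → ∀ j, n (i + 1) j = n i j - p i j)
    (hopt : ∀ i, ∀ hi : i < t, ∀ q : Fin N → ℝ,
      (∀ j, 0 ≤ q j) → (∑ j, q j = 1 / (M : ℝ)) →
      (∀ j, q j ≤ min (n i j) (1 / (M : ℝ))) →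
      ∑ j, p i j * ‖x ⟨i, hi⟩ - y j‖ ≤ ∑ j, q j * ‖x ⟨i, hi⟩ - y j‖) :
    sInf {w : ℝ | ∃ π : Fin t → Fin N → ℝ,
        (∀ i j, 0 ≤ π i j) ∧
        (∀ i : Fin t, ∑ j, π i j =
          1 / (M : ℝ) + if (i : ℕ) = t - 1 then ((M : ℝ) - t) / M else 0) ∧
        (∀ j, ∑ i, π i j = 1 / (N : ℝ)) ∧
        w = ∑ i, ∑ j, π i j * ‖x i - y j‖} ≤
      (∑ i : Fin t, ∑ j, p i j * ‖x i - y j‖) +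
        ∑ j, n t j * ‖x ⟨t - 1, Nat.sub_lt ht one_pos⟩ - y j‖ :=
  wasserstein_upper_bound_single_agent_general hM hN ht x y n hn0 p hp0 hpsum hpcap hupd
end

section
/- For the decentralized scheme, if an agent k's true Wasserstein distance is defined over its neighborhood set 𝒩_k, then W^k(t) ≤ ∑_{k'∈𝒩_k} ∑_{i=1}^t W̃^{k'}(i) + ∑_{k'∈𝒩_k} ∑_{j=1}^N n_t^{k'}(y_j)·‖x_t^{k'} − y_j‖, where W̃^{k'}(i) are the per-step single-source optimal costs of agent k' and n_t^{k'}(y_j) its remaining weights. -/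
/-- **Upper bound on the decentralized Wasserstein distance (Theorem 3).**
`K` is the neighborhood set `𝒩_k` of agent `k`.  Each agent `κ ∈ K` follows the
single-agent scheme: past points `x κ 0, …, x κ (t-1)` each with mass `1/M`, the
remaining `(M - t)/M` mass accumulated at the current position `x κ (t-1)`
(Assumption 1), weights `n κ` starting from `1/N` and updated by the per-step
optimal single-source plans `p κ i` (transported mass `1/M`, capacities
`min (n κ i j) (1/M)`) with per-step optimal costs
`W̃^κ(i) = ∑ j, p κ i j * ‖x κ i - y j‖`.  Then the optimal value `W^k(t)` of the
joint transportation LP between the union of the agents' robot-point measures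
and the sample-point measure satisfies
`W^k(t) ≤ ∑_{κ ∈ 𝒩_k} ∑_{i ≤ t} W̃^κ(i)
        + ∑_{κ ∈ 𝒩_k} ∑_j n κ t j * ‖x κ (t-1) - y j‖`. -/
theorem wasserstein_upper_bound_decentralized {M N t : ℕ}
    (hM : 0 < M) (hN : 0 < N) (ht : 0 < t) (htM : t ≤ M)
    (K : Type*) [Fintype K]
    (x : K → Fin t → EuclideanSpace ℝ (Fin 2))
    (y : Fin N → EuclideanSpace ℝ (Fin 2))
    (n : K → ℕ → Fin N → ℝ) (hn0 : ∀ κ j, n κ 0 j = 1 / (N : ℝ))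
    (p : K → ℕ → Fin N → ℝ)
    (hp0 : ∀ κ i, i < t → ∀ j, 0 ≤ p κ i j)
    (hpsum : ∀ κ i, i < t → ∑ j, p κ i j = 1 / (M : ℝ))
    (hpcap : ∀ κ i, i < t → ∀ j, p κ i j ≤ min (n κ i j) (1 / (M : ℝ)))
    (hupd : ∀ κ i, i < t → ∀ j, n κ (i + 1) j = n κ i j - p κ i j)
    (hopt : ∀ κ i, ∀ hi : i < t, ∀ q : Fin N → ℝ,
      (∀ j, 0 ≤ q j) → (∑ j, q j = 1 / (M : ℝ)) →
      (∀ j, q j ≤ min (n κ i j) (1 / (M : ℝ))) →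
      ∑ j, p κ i j * ‖x κ ⟨i, hi⟩ - y j‖ ≤ ∑ j, q j * ‖x κ ⟨i, hi⟩ - y j‖) :
    sInf {w : ℝ | ∃ π : K → Fin t → Fin N → ℝ,
        (∀ κ i j, 0 ≤ π κ i j) ∧
        (∀ κ, ∀ i : Fin t, ∑ j, π κ i j =
          1 / (M : ℝ) + if (i : ℕ) = t - 1 then ((M : ℝ) - t) / M else 0) ∧
        (∀ j, ∑ κ, ∑ i, π κ i j = (Fintype.card K : ℝ) / N) ∧
        w = ∑ κ, ∑ i, ∑ j, π κ i j * ‖x κ i - y j‖} ≤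
      (∑ κ, ∑ i : Fin t, ∑ j, p κ i j * ‖x κ i - y j‖) +
        ∑ κ, ∑ j, n κ t j * ‖x κ ⟨t - 1, Nat.sub_lt ht one_pos⟩ - y j‖ := by

  -- nonnegativity of the weights
  have hnn : ∀ κ, ∀ i, i ≤ t → ∀ j, 0 ≤ n κ i j := by
    intro κ i
    induction i with
    | zero => intro _ j; rw [hn0]; positivity
    | succ i ih =>
        intro hi j
        have hit : i < t := hi
        rw [hupd κ i hit j]
        have := hpcap κ i hit j
        have h1 := (le_min_iff.mp this).1
        have := ih (le_of_lt hit) j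
        linarith
  -- telescoping: n κ i j = n κ 0 j - ∑_{m < i} p κ m j
  have htel : ∀ κ j, ∀ i, i ≤ t →
      n κ i j = n κ 0 j - ∑ m ∈ Finset.range i, p κ m j := by
    intro κ j i
    induction i with
    | zero => intro _; simp
    | succ i ih =>
        intro hi
        have hit : i < t := hi
        rw [hupd κ i hit j, ih (le_of_lt hit), Finset.sum_range_succ]
        ring
  -- mass of remaining weights
  have hmass : ∀ κ, ∑ j, n κ t j = ((M : ℝ) - t) / M := by
    intro κ
    have : ∀ i, i ≤ t → ∑ j, n κ i j = 1 - (i : ℝ) / M := by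
      intro i
      induction i with
      | zero => intro _; simp [hn0]; field_simp
      | succ i ih =>
          intro hi
          have hit : i < t := hi
          have : ∑ j, n κ (i+1) j = ∑ j, n κ i j - ∑ j, p κ i j := by
            rw [← Finset.sum_sub_distrib]
            exact Finset.sum_congr rfl fun j _ => hupd κ i hit j
          rw [this, ih (le_of_lt hit), hpsum κ i hit]
          push_cast
          have hM' : (M : ℝ) ≠ 0 := Nat.cast_ne_zero.mpr hM.ne'
          field_simp
          ring
    rw [this t le_rfl]
    have hM' : (M : ℝ) ≠ 0 := Nat.cast_ne_zero.mpr hM.ne'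
    field_simp
  -- the candidate plan
  set i₀ : Fin t := ⟨t - 1, Nat.sub_lt ht one_pos⟩ with hi₀
  set π : K → Fin t → Fin N → ℝ :=
    fun κ i j => p κ i j + if (i : ℕ) = t - 1 then n κ t j else 0 with hπ
  have hite : ∀ (f : Fin t → ℝ),
      ∑ i : Fin t, (if (i : ℕ) = t - 1 then f i else 0) = f i₀ := by
    intro f
    have : ∀ i : Fin t, ((i : ℕ) = t - 1) ↔ i = i₀ := by
      intro i; rw [Fin.ext_iff]
    simp only [this]
    simp
  have hmem : ((∑ κ, ∑ i : Fin t, ∑ j, p κ i j * ‖x κ i - y j‖) +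
        ∑ κ, ∑ j, n κ t j * ‖x κ i₀ - y j‖) ∈
      {w : ℝ | ∃ π : K → Fin t → Fin N → ℝ,
        (∀ κ i j, 0 ≤ π κ i j) ∧
        (∀ κ, ∀ i : Fin t, ∑ j, π κ i j =
          1 / (M : ℝ) + if (i : ℕ) = t - 1 then ((M : ℝ) - t) / M else 0) ∧
        (∀ j, ∑ κ, ∑ i, π κ i j = (Fintype.card K : ℝ) / N) ∧
        w = ∑ κ, ∑ i, ∑ j, π κ i j * ‖x κ i - y j‖} := by
    refine ⟨π, ?_, ?_, ?_, ?_⟩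
    · intro κ i j
      have h1 := hp0 κ i i.isLt j
      have h2 := hnn κ t le_rfl j
      simp only [hπ]
      split_ifs <;> linarith
    · intro κ i
      simp only [hπ]
      rw [Finset.sum_add_distrib, hpsum κ i i.isLt]
      congr 1
      by_cases h : (i : ℕ) = t - 1 <;> simp [h, hmass κ]
    · intro j
      have hcol : ∀ κ, ∑ i : Fin t, π κ i j = (1 : ℝ) / N := by
        intro κ
        simp only [hπ]
        rw [Finset.sum_add_distrib, hite (fun _ => n κ t j)]
        have : ∑ i : Fin t, p κ (i : ℕ) j = ∑ m ∈ Finset.range t, p κ m j := by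
          rw [Finset.sum_range fun m => p κ m j]
        rw [this]
        have := htel κ j t le_rfl
        rw [hn0] at this
        linarith
      rw [Finset.sum_congr rfl fun κ _ => hcol κ]
      simp [Finset.sum_const, div_eq_mul_inv]
    · have key : ∀ κ, ∑ i : Fin t, ∑ j, π κ i j * ‖x κ i - y j‖
          = (∑ i : Fin t, ∑ j, p κ (i : ℕ) j * ‖x κ i - y j‖)
            + ∑ j, n κ t j * ‖x κ i₀ - y j‖ := by
        intro κ
        have h1 : ∀ i : Fin t, ∑ j, π κ i j * ‖x κ i - y j‖
            = ∑ j, p κ (i : ℕ) j * ‖x κ i - y j‖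
              + (if (i : ℕ) = t - 1 then ∑ j, n κ t j * ‖x κ i - y j‖
                 else 0) := by
          intro i
          by_cases h : (i : ℕ) = t - 1 <;>
            simp [hπ, h, add_mul, Finset.sum_add_distrib]
        rw [Finset.sum_congr rfl fun i _ => h1 i, Finset.sum_add_distrib,
          hite (fun i => ∑ j, n κ t j * ‖x κ i - y j‖)]
      rw [Finset.sum_congr rfl fun κ _ => key κ, Finset.sum_add_distrib]
  have hbdd : BddBelow {w : ℝ | ∃ π : K → Fin t → Fin N → ℝ,
        (∀ κ i j, 0 ≤ π κ i j) ∧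
        (∀ κ, ∀ i : Fin t, ∑ j, π κ i j =
          1 / (M : ℝ) + if (i : ℕ) = t - 1 then ((M : ℝ) - t) / M else 0) ∧
        (∀ j, ∑ κ, ∑ i, π κ i j = (Fintype.card K : ℝ) / N) ∧
        w = ∑ κ, ∑ i, ∑ j, π κ i j * ‖x κ i - y j‖} := by
    refine ⟨0, fun w hw => ?_⟩
    obtain ⟨π', hpos, _, _, hw⟩ := hw
    rw [hw]
    refine Finset.sum_nonneg fun κ _ => Finset.sum_nonneg fun i _ =>
      Finset.sum_nonneg fun j _ => mul_nonneg (hpos κ i j) (norm_nonneg _)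
  exact csInf_le hbdd hmem
end
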